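/- There exists a universal constant C > 0 with the following property. Let (Ω, P) be a probability space, δ > 0, L ≥ 0, y ∈ ℝ^d, K ≥ 1, and let g : ℝ^d × Ω → ℝ be such that for P-almost every ω the map g(·, ω) is differentiable with L-Lipschitz gradient on ℝ^d, the function ω ↦ ∇_y g(y, ω) is Bochner square-integrable, ∇G(y) = ∫ ∇_y g(y, ω) dP(ω) where G(y') := ∫ g(y', ω) dP(ω), and σ² := ∫ ‖∇_y g(y, ω) − ∇G(y)‖² dP(ω). Then, averaging jointly over ω ∼ P and over (r_1, …, r_K) uniform on ({−1, +1}^d)^K (independent of ω), E ‖(1/K) Σ_{k=1}^K ((g(y + δr_k, ω) − g(y − δr_k, ω))/(2δ)) · r_k − ∇G(y)‖² ≤ C · ( (d/K)‖∇G(y)‖² + L² δ² d³ + (1 + d/K) σ² ). -/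

import Mathlib

open MeasureTheory

/-- The sign vector in `{-1,+1}^d ⊆ ℝ^d` encoded by a Boolean vector. -/
noncomputable def signVec (d : ℕ) (s : Fin d → Bool) : EuclideanSpace ℝ (Fin d) :=
  WithLp.toLp 2 (fun i => if s i then (1 : ℝ) else -1)

/-! Write `q = ∇g(y, ω)`. By the mean value theorem applied to `g(·, ω) - ⟪q, ·⟫`, each
one-direction estimate equals `⟪q, r⟫ r` up to a bias of norm at most `L δ ‖r‖³ = L δ d^{3/2}`.
Over the Rademacher cube `∑_r ⟪q, r⟫ r = 2^d q`, so the centred terms `⟪q, r⟫ r - q` have mean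
zero and mean square `(d - 1)‖q‖²`, and averaging `K` independent directions divides this by `K`.
For each `ω` the mean squared error is therefore at most `3((d/K)‖q‖² + ‖q - p‖² + L²δ²d³)`;
`‖q‖² ≤ 2‖q - p‖² + 2‖p‖²` and integration in `ω` give the bound with `C = 6`. -/

open Finset
open scoped RealInnerProductSpace

section FunctionSpaceSums

variable {ι S M : Type*} [Fintype ι] [DecidableEq ι] [Fintype S] [AddCommMonoid M]

theorem Fintype.sum_fun_apply (f : S → M) (k : ι) :
    ∑ t : ι → S, f (t k) = Fintype.card S ^ (Fintype.card ι - 1) • ∑ s, f s := by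
  simpa using Fintype.sum_piFinset_apply f univ k

theorem Fintype.sum_fun_apply_apply_eq_zero (F : S → S → M) (hF : ∀ a, ∑ b, F a b = 0)
    {j k : ι} (hjk : j ≠ k) : ∑ t : ι → S, F (t j) (t k) = 0 := by
  rw [← (Equiv.funSplitAt k S).symm.sum_comp, Fintype.sum_prod_type_right]
  simp [Equiv.funSplitAt_symm_apply, hjk, hF]

theorem sum_norm_sum_fun_apply_sq {E : Type*} [NormedAddCommGroup E] [InnerProductSpace ℝ E]
    (v : S → E) (hv : ∑ s, v s = 0) :
    ∑ t : ι → S, ‖∑ k, v (t k)‖ ^ 2 =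
      Fintype.card ι * Fintype.card S ^ (Fintype.card ι - 1) * ∑ s, ‖v s‖ ^ 2 := by
  have cross (j k : ι) : ∑ t : ι → S, ⟪v (t j), v (t k)⟫ =
      if j = k then Fintype.card S ^ (Fintype.card ι - 1) * ∑ s, ‖v s‖ ^ 2 else 0 := by
    split_ifs with hjk
    · subst hjk
      simp_rw [real_inner_self_eq_norm_sq]
      rw [Fintype.sum_fun_apply (fun s => ‖v s‖ ^ 2), nsmul_eq_mul, Nat.cast_pow]
    · refine Fintype.sum_fun_apply_apply_eq_zero (fun a b => ⟪v a, v b⟫) (fun a => ?_) hjk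
      rw [← inner_sum, hv, inner_zero_right]
  calc ∑ t : ι → S, ‖∑ k, v (t k)‖ ^ 2 = ∑ j, ∑ k, ∑ t : ι → S, ⟪v (t j), v (t k)⟫ := by
        simp_rw [← real_inner_self_eq_norm_sq, sum_inner, inner_sum]
        rw [sum_comm]
        exact sum_congr rfl fun _ _ => sum_comm
    _ = _ := by simp [cross, mul_assoc]

end FunctionSpaceSums

section Rademacher

theorem signVec_apply (d : ℕ) (s : Fin d → Bool) (i : Fin d) :
    signVec d s i = if s i then 1 else -1 := rfl

theorem signVec_apply_mul_self (d : ℕ) (s : Fin d → Bool) (i : Fin d) :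
    signVec d s i * signVec d s i = 1 := by
  rw [signVec_apply]; split_ifs <;> norm_num

theorem norm_signVec (d : ℕ) (s : Fin d → Bool) : ‖signVec d s‖ = √d := by
  simp [EuclideanSpace.norm_eq, signVec_apply, apply_ite]

theorem sum_signVec_apply_mul_eq_zero (d : ℕ) {i j : Fin d} (hij : i ≠ j) :
    ∑ s : Fin d → Bool, signVec d s i * signVec d s j = 0 :=
  Fintype.sum_fun_apply_apply_eq_zero
    (fun a b : Bool => (if a then 1 else -1) * if b then (1 : ℝ) else -1) (fun a => by simp) hij

theorem sum_inner_signVec_smul_signVec (d : ℕ) (q : EuclideanSpace ℝ (Fin d)) :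
    ∑ s : Fin d → Bool, ⟪q, signVec d s⟫ • signVec d s = (2 ^ d : ℝ) • q := by
  ext i
  have hcoord (j : Fin d) : ∑ s : Fin d → Bool, signVec d s j * signVec d s i =
      if j = i then 2 ^ d else 0 := by
    split_ifs with hji
    · subst hji; simp [signVec_apply_mul_self]
    · exact sum_signVec_apply_mul_eq_zero d hji
  simp only [WithLp.ofLp_sum, Finset.sum_apply, PiLp.smul_apply, smul_eq_mul, PiLp.inner_apply,
    RCLike.inner_apply, conj_trivial]
  calc ∑ s : Fin d → Bool, (∑ j, signVec d s j * q j) * signVec d s i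
      = ∑ j, q j * ∑ s : Fin d → Bool, signVec d s j * signVec d s i := by
        simp_rw [mul_sum, sum_mul]
        rw [sum_comm]
        exact sum_congr rfl fun _ _ => sum_congr rfl fun _ _ => by ring
    _ = 2 ^ d * q i := by simp [hcoord, mul_comm (q _)]

theorem sum_inner_signVec_sq (d : ℕ) (q : EuclideanSpace ℝ (Fin d)) :
    ∑ s : Fin d → Bool, ⟪q, signVec d s⟫ ^ 2 = 2 ^ d * ‖q‖ ^ 2 := by
  have h := congrArg (⟪q, ·⟫) (sum_inner_signVec_smul_signVec d q)
  simpa [inner_sum, real_inner_smul_right, sq, real_inner_self_eq_norm_sq] using h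

theorem sum_norm_inner_signVec_smul_sub_sq (d : ℕ) (q : EuclideanSpace ℝ (Fin d)) :
    ∑ s : Fin d → Bool, ‖⟪q, signVec d s⟫ • signVec d s - q‖ ^ 2 =
      2 ^ d * (d - 1) * ‖q‖ ^ 2 := by
  have hterm (s : Fin d → Bool) : ‖⟪q, signVec d s⟫ • signVec d s - q‖ ^ 2 =
      (d - 2) * ⟪q, signVec d s⟫ ^ 2 + ‖q‖ ^ 2 := by
    rw [norm_sub_sq_real, norm_smul, mul_pow, norm_signVec, Real.sq_sqrt (Nat.cast_nonneg _),
      Real.norm_eq_abs, sq_abs, real_inner_smul_left, real_inner_comm q]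
    ring
  simp only [hterm, sum_add_distrib, ← mul_sum, sum_inner_signVec_sq, sum_const, card_univ,
    Fintype.card_fun, Fintype.card_bool, Fintype.card_fin, nsmul_eq_mul]
  push_cast
  ring

end Rademacher

theorem norm_add₃_sq_le {E : Type*} [SeminormedAddCommGroup E] (a b c : E) :
    ‖a + b + c‖ ^ 2 ≤ 3 * (‖a‖ ^ 2 + ‖b‖ ^ 2 + ‖c‖ ^ 2) := by
  have h := norm_add₃_le (a := a) (b := b) (c := c)
  nlinarith [norm_nonneg (a + b + c), sq_nonneg (‖a‖ - ‖b‖), sq_nonneg (‖a‖ - ‖c‖),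
    sq_nonneg (‖b‖ - ‖c‖)]

section SampleMean

variable {S E : Type*} [Fintype S] [Nonempty S] [NormedAddCommGroup E] [InnerProductSpace ℝ E]
  {K : ℕ}

theorem avg_norm_sampleMean_sq (hK : 1 ≤ K) (v : S → E) (hv : ∑ s, v s = 0) :
    ((Fintype.card S : ℝ) ^ K)⁻¹ * ∑ t : Fin K → S, ‖(K : ℝ)⁻¹ • ∑ k, v (t k)‖ ^ 2 =
      ((K : ℝ) * Fintype.card S)⁻¹ * ∑ s, ‖v s‖ ^ 2 := by
  obtain ⟨n, rfl⟩ := Nat.exists_eq_add_of_le' hK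
  simp_rw [norm_smul, mul_pow, ← mul_sum, sum_norm_sum_fun_apply_sq v hv]
  simp only [Fintype.card_fin, add_tsub_cancel_right, norm_inv, RCLike.norm_natCast]
  field_simp
  ring

theorem avg_norm_sampleMean_sub_sq_le (hK : 1 ≤ K) (w v b : S → E) (m p : E)
    (hw : ∀ s, w s = m + v s + b s) (hv : ∑ s, v s = 0) {M : ℝ} (hb : ∀ s, ‖b s‖ ≤ M) :
    ((Fintype.card S : ℝ) ^ K)⁻¹ * ∑ t : Fin K → S, ‖(K : ℝ)⁻¹ • ∑ k, w (t k) - p‖ ^ 2 ≤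
      3 * (((K : ℝ) * Fintype.card S)⁻¹ * ∑ s, ‖v s‖ ^ 2 + ‖m - p‖ ^ 2 + M ^ 2) := by
  have hK0 : (K : ℝ) ≠ 0 := by positivity
  have hsplit (t : Fin K → S) : (K : ℝ)⁻¹ • ∑ k, w (t k) - p =
      (K : ℝ)⁻¹ • ∑ k, v (t k) + (m - p) + (K : ℝ)⁻¹ • ∑ k, b (t k) := by
    simp only [hw, sum_add_distrib, sum_const, card_univ, Fintype.card_fin, smul_add,
      ← Nat.cast_smul_eq_nsmul ℝ, smul_smul, inv_mul_cancel₀ hK0, one_smul]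
    abel
  have hbias (t : Fin K → S) : ‖(K : ℝ)⁻¹ • ∑ k, b (t k)‖ ^ 2 ≤ M ^ 2 := by
    have hnorm : ‖(K : ℝ)⁻¹ • ∑ k, b (t k)‖ ≤ M := by
      rw [norm_smul, norm_inv, RCLike.norm_natCast, inv_mul_le_iff₀ (by positivity)]
      simpa using norm_sum_le_of_le univ fun k _ => hb (t k)
    exact pow_le_pow_left₀ (norm_nonneg _) hnorm 2
  calc ((Fintype.card S : ℝ) ^ K)⁻¹ * ∑ t : Fin K → S, ‖(K : ℝ)⁻¹ • ∑ k, w (t k) - p‖ ^ 2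
      ≤ ((Fintype.card S : ℝ) ^ K)⁻¹ *
          ∑ t : Fin K → S, 3 * (‖(K : ℝ)⁻¹ • ∑ k, v (t k)‖ ^ 2 + (‖m - p‖ ^ 2 + M ^ 2)) := by
        gcongr with t
        rw [hsplit]
        linarith [norm_add₃_sq_le ((K : ℝ)⁻¹ • ∑ k, v (t k)) (m - p) ((K : ℝ)⁻¹ • ∑ k, b (t k)),
          hbias t]
    _ = 3 * (((Fintype.card S : ℝ) ^ K)⁻¹ * ∑ t : Fin K → S, ‖(K : ℝ)⁻¹ • ∑ k, v (t k)‖ ^ 2 +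
          (‖m - p‖ ^ 2 + M ^ 2)) := by
        simp only [← mul_sum, sum_add_distrib, sum_const, card_univ, Fintype.card_fun,
          Fintype.card_fin, nsmul_eq_mul]
        push_cast
        field_simp
    _ = _ := by rw [avg_norm_sampleMean_sq hK v hv]; ring

end SampleMean

section TwoPoint

variable {E : Type*} [NormedAddCommGroup E] [InnerProductSpace ℝ E] [CompleteSpace E]

noncomputable def twoPointEstimator (h : E → ℝ) (y : E) (δ : ℝ) (r : E) : E :=
  ((h (y + δ • r) - h (y - δ • r)) / (2 * δ)) • r

theorem norm_fderiv_sub_innerSL (h : E → ℝ) (x q : E) :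
    ‖fderiv ℝ h x - innerSL ℝ q‖ = ‖gradient h x - q‖ := by
  rw [← (InnerProductSpace.toDual ℝ E).apply_symm_apply (fderiv ℝ h x), ← gradient,
    ← LinearIsometryEquiv.norm_map (InnerProductSpace.toDual ℝ E) (gradient h x - q), map_sub]
  rfl

theorem abs_sub_sub_inner_gradient_le {h : E → ℝ} (hdiff : Differentiable ℝ h) {L : ℝ}
    (hL0 : 0 ≤ L) (hL : ∀ a b, ‖gradient h a - gradient h b‖ ≤ L * ‖a - b‖) (y r : E) {δ : ℝ}
    (hδ : 0 ≤ δ) :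
    |h (y + δ • r) - h (y - δ • r) - 2 * δ * ⟪gradient h y, r⟫| ≤ 2 * L * δ ^ 2 * ‖r‖ ^ 2 := by
  set q := gradient h y
  have hderiv : ∀ x ∈ segment ℝ (y - δ • r) (y + δ • r),
      HasFDerivWithinAt (fun z => h z - ⟪q, z⟫) (fderiv ℝ h x - innerSL ℝ q)
        (segment ℝ (y - δ • r) (y + δ • r)) x :=
    fun x _ => ((hdiff x).hasFDerivAt.sub (innerSL ℝ q).hasFDerivAt).hasFDerivWithinAt
  have hbound : ∀ x ∈ segment ℝ (y - δ • r) (y + δ • r),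
      ‖fderiv ℝ h x - innerSL ℝ q‖ ≤ L * (δ * ‖r‖) := by
    intro x hx
    have hends : ∀ z ∈ ({y - δ • r, y + δ • r} : Set E), z ∈ Metric.closedBall y (δ * ‖r‖) := by
      simp [norm_smul, abs_of_nonneg hδ]
    have hxy : ‖x - y‖ ≤ δ * ‖r‖ := by
      simpa [dist_eq_norm] using
        (convex_closedBall y (δ * ‖r‖)).segment_subset (hends _ (by simp)) (hends _ (by simp)) hx
    rw [norm_fderiv_sub_innerSL]
    exact (hL x y).trans (by gcongr)
  have hmvt := (convex_segment _ _).norm_image_sub_le_of_norm_hasFDerivWithin_le hderiv hbound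
    (left_mem_segment ℝ _ _) (right_mem_segment ℝ _ _)
  have hdiam : (y + δ • r) - (y - δ • r) = (2 * δ) • r := by
    rw [two_mul, add_smul]; abel
  rw [← Real.norm_eq_abs]
  calc ‖h (y + δ • r) - h (y - δ • r) - 2 * δ * ⟪q, r⟫‖
      = ‖(h (y + δ • r) - ⟪q, y + δ • r⟫) - (h (y - δ • r) - ⟪q, y - δ • r⟫)‖ := by
        congr 1
        rw [inner_add_right, inner_sub_right, real_inner_smul_right]
        ring
    _ ≤ L * (δ * ‖r‖) * ‖(y + δ • r) - (y - δ • r)‖ := hmvt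
    _ = 2 * L * δ ^ 2 * ‖r‖ ^ 2 := by
        rw [hdiam, norm_smul, Real.norm_of_nonneg (by positivity)]
        ring

theorem norm_twoPointEstimator_sub_le {h : E → ℝ} (hdiff : Differentiable ℝ h) {L : ℝ}
    (hL0 : 0 ≤ L) (hL : ∀ a b, ‖gradient h a - gradient h b‖ ≤ L * ‖a - b‖) (y r : E) {δ : ℝ}
    (hδ : 0 < δ) :
    ‖twoPointEstimator h y δ r - ⟪gradient h y, r⟫ • r‖ ≤ L * δ * ‖r‖ ^ 3 := by
  have hquot : (h (y + δ • r) - h (y - δ • r)) / (2 * δ) - ⟪gradient h y, r⟫ =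
      (h (y + δ • r) - h (y - δ • r) - 2 * δ * ⟪gradient h y, r⟫) / (2 * δ) := by
    field_simp
  rw [twoPointEstimator, ← sub_smul, norm_smul, Real.norm_eq_abs, hquot, abs_div,
    abs_of_pos (by positivity : (0 : ℝ) < 2 * δ)]
  calc |h (y + δ • r) - h (y - δ • r) - 2 * δ * ⟪gradient h y, r⟫| / (2 * δ) * ‖r‖
      ≤ 2 * L * δ ^ 2 * ‖r‖ ^ 2 / (2 * δ) * ‖r‖ := by
        gcongr
        exact abs_sub_sub_inner_gradient_le hdiff hL0 hL y r hδ.le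
    _ = L * δ * ‖r‖ ^ 3 := by field_simp

end TwoPoint

theorem avg_norm_rademacherEstimator_sub_sq_le {d K : ℕ} (hK : 1 ≤ K)
    {h : EuclideanSpace ℝ (Fin d) → ℝ} (hdiff : Differentiable ℝ h) {L : ℝ} (hL0 : 0 ≤ L)
    (hL : ∀ a b, ‖gradient h a - gradient h b‖ ≤ L * ‖a - b‖) (y p : EuclideanSpace ℝ (Fin d))
    {δ : ℝ} (hδ : 0 < δ) :
    ((2 : ℝ) ^ (d * K))⁻¹ * ∑ t : Fin K → Fin d → Bool,
        ‖(K : ℝ)⁻¹ • ∑ k, twoPointEstimator h y δ (signVec d (t k)) - p‖ ^ 2 ≤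
      6 * ((d / K) * ‖p‖ ^ 2 + L ^ 2 * δ ^ 2 * d ^ 3 + (1 + d / K) * ‖gradient h y - p‖ ^ 2) := by
  set q := gradient h y
  have hmean : ∑ s : Fin d → Bool, (⟪q, signVec d s⟫ • signVec d s - q) = 0 := by
    simp [sum_sub_distrib, sum_inner_signVec_smul_signVec, ← Nat.cast_smul_eq_nsmul ℝ]
  have hbias (s : Fin d → Bool) :
      ‖twoPointEstimator h y δ (signVec d s) - ⟪q, signVec d s⟫ • signVec d s‖ ≤
        L * δ * √d ^ 3 := by
    simpa only [norm_signVec] using norm_twoPointEstimator_sub_le hdiff hL0 hL y (signVec d s) hδ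
  have hsample := avg_norm_sampleMean_sub_sq_le hK (fun s => twoPointEstimator h y δ (signVec d s))
    _ _ q p (fun s => by abel) hmean hbias
  have hq : ‖q‖ ^ 2 ≤ 2 * ‖q - p‖ ^ 2 + 2 * ‖p‖ ^ 2 := by
    have := norm_add_le (q - p) p
    rw [sub_add_cancel] at this
    nlinarith [norm_nonneg q, norm_nonneg (q - p), norm_nonneg p, sq_nonneg (‖q - p‖ - ‖p‖)]
  simp only [sum_norm_inner_signVec_smul_sub_sq, Fintype.card_fun, Fintype.card_bool,
    Fintype.card_fin, Nat.cast_pow, Nat.cast_ofNat, ← pow_mul] at hsample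
  refine hsample.trans ?_
  have hsqrt : (√(d : ℝ) ^ 3) ^ 2 = (d : ℝ) ^ 3 := by
    rw [← pow_mul, mul_comm, pow_mul, Real.sq_sqrt (Nat.cast_nonneg _)]
  calc 3 * (((K : ℝ) * 2 ^ d)⁻¹ * (2 ^ d * (d - 1) * ‖q‖ ^ 2) + ‖q - p‖ ^ 2 +
        (L * δ * √d ^ 3) ^ 2)
      = 3 * ((d - 1) / K * ‖q‖ ^ 2 + ‖q - p‖ ^ 2 + L ^ 2 * δ ^ 2 * d ^ 3) := by
        rw [mul_pow, hsqrt]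
        field_simp
    _ ≤ 3 * (d / K * (2 * ‖q - p‖ ^ 2 + 2 * ‖p‖ ^ 2) + ‖q - p‖ ^ 2 + L ^ 2 * δ ^ 2 * d ^ 3) := by
        gcongr
        · exact sub_le_self _ zero_le_one
    _ ≤ _ := by
        have : 0 ≤ L ^ 2 * δ ^ 2 * (d : ℝ) ^ 3 := by positivity
        nlinarith [sq_nonneg ‖q - p‖]

theorem sum_integral_le_integral_of_ae_sum_le {ι Ω : Type*} [Fintype ι] [MeasurableSpace Ω]
    {μ : Measure Ω} {f : ι → Ω → ℝ} {b : Ω → ℝ} (hf : ∀ i, AEStronglyMeasurable (f i) μ)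
    (hf0 : ∀ i ω, 0 ≤ f i ω) (hb : Integrable b μ) (hle : ∀ᵐ ω ∂μ, ∑ i, f i ω ≤ b ω) :
    ∑ i, ∫ ω, f i ω ∂μ ≤ ∫ ω, b ω ∂μ := by
  have hfi (i : ι) : Integrable (f i) μ := by
    refine hb.mono' (hf i) ?_
    filter_upwards [hle] with ω hω
    rw [Real.norm_of_nonneg (hf0 i ω)]
    exact (single_le_sum (fun j _ => hf0 j ω) (mem_univ i)).trans hω
  rw [← integral_finsetSum _ fun i _ => hfi i]
  exact integral_mono_of_nonneg (ae_of_all _ fun ω => sum_nonneg fun i _ => hf0 i ω) hb hle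

/-- **Shared-sample Rademacher estimator bound** (Eq. shared-sample-rademacher-bound).
There is a universal constant `C > 0` such that for every stochastic loss
`g(·, ω)` with a.e. `L`-Lipschitz gradient, square-integrable sampled gradient at
`y` with population gradient `p = ∇G(y) = ∫ ∇g(y, ω) dP` and variance `σ²`, the
joint average (over `ω ∼ P` and all `2^{dK}` direction tuples) of the squared
error of the `K`-direction two-point estimator with radius `δ` and one shared
sample is at most `C((d/K)‖∇G(y)‖² + L²δ²d³ + (1 + d/K)σ²)`. -/
theorem stmt_13 :
    ∃ C : ℝ, 0 < C ∧
      ∀ (d K : ℕ), 1 ≤ d → 1 ≤ K →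
      ∀ (Ω : Type) (_ : MeasurableSpace Ω) (P : Measure Ω),
        IsProbabilityMeasure P →
      ∀ (δ L : ℝ), 0 < δ → 0 ≤ L →
      ∀ (y : EuclideanSpace ℝ (Fin d)) (g : EuclideanSpace ℝ (Fin d) → Ω → ℝ)
        (G : EuclideanSpace ℝ (Fin d) → ℝ) (p : EuclideanSpace ℝ (Fin d)) (σ2 : ℝ),
        (∀ w, AEStronglyMeasurable (fun ω => g w ω) P) →
        (∀ᵐ ω ∂P, Differentiable ℝ (fun w => g w ω) ∧
          ∀ a b, ‖gradient (fun w => g w ω) a - gradient (fun w => g w ω) b‖ ≤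
            L * ‖a - b‖) →
        MemLp (fun ω => gradient (fun w => g w ω) y) 2 P →
        (∀ w, G w = ∫ ω, g w ω ∂P) →
        p = (∫ ω, gradient (fun w => g w ω) y ∂P) →
        HasGradientAt G p y →
        σ2 = (∫ ω, ‖gradient (fun w => g w ω) y - p‖ ^ 2 ∂P) →
        ((2 : ℝ) ^ (d * K))⁻¹ *
            ∑ t : Fin K → Fin d → Bool,
              ∫ ω, ‖(K : ℝ)⁻¹ •
                  (∑ k : Fin K,
                    ((g (y + δ • signVec d (t k)) ω - g (y - δ • signVec d (t k)) ω) /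
                        (2 * δ)) • signVec d (t k)) -
                p‖ ^ 2 ∂P ≤
          C * (((d : ℝ) / (K : ℝ)) * ‖p‖ ^ 2 + L ^ 2 * δ ^ 2 * (d : ℝ) ^ 3 +
            (1 + (d : ℝ) / (K : ℝ)) * σ2) := by
  refine ⟨6, by norm_num, ?_⟩
  intro d K _ hK Ω _ P _ δ L hδ hL0 y g G p σ2 hmeas hsmooth hgrad _ _ _ hσ
  have hvar : Integrable (fun ω => ‖gradient (fun w => g w ω) y - p‖ ^ 2) P :=
    (hgrad.sub (memLp_const p)).integrable_norm_pow two_ne_zero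
  rw [mul_sum]
  simp_rw [← integral_const_mul]
  calc _ ≤ ∫ ω, 6 * (((d : ℝ) / K) * ‖p‖ ^ 2 + L ^ 2 * δ ^ 2 * (d : ℝ) ^ 3 +
        (1 + (d : ℝ) / K) * ‖gradient (fun w => g w ω) y - p‖ ^ 2) ∂P := by
        refine sum_integral_le_integral_of_ae_sum_le (fun t => ?_) (fun t ω => by positivity)
          (((integrable_const _).add (hvar.const_mul _)).const_mul _) ?_
        · fun_prop
        · filter_upwards [hsmooth] with ω ⟨hdiff, hL⟩
          rw [← mul_sum]
          exact avg_norm_rademacherEstimator_sub_sq_le hK hdiff hL0 hL y p hδ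
    _ = _ := by
        rw [integral_const_mul, integral_add (integrable_const _) (hvar.const_mul _),
          integral_const_mul, ← hσ]
        simp
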